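/- arXiv:2508.09978 — 5 statements merged into one kernel-verified Lean document; each statement's English description precedes it below -/
import Mathlib

section
/- Let R be a commutative ring, a, b ∈ R, and n ≥ 1. Then Σ_{r=0}^{⌊n/2⌋} (C(n,r) − C(n,r−1)) · (a·b)^r · (Σ_{j=0}^{n−2r} a^j·b^{n−2r−j}) = (a + b)^n, where C(n,−1) = 0. -/
/-!
Since `(ab)^r · Σ_{j ≤ n-2r} a^j b^(n-2r-j) = Σ_{r ≤ k ≤ n-r} a^k b^(n-k)`, the coefficient of
`a^k b^(n-k)` on the left is `Σ_{r ≤ min(k, n-k)} (C(n,r) - C(n,r-1))`. This telescopes to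
`C(n, min(k, n-k)) = C(n,k)`, and the binomial theorem finishes.
-/

open BigOperators

/-- Multiplicity `C(n,r) - C(n,r-1)` (with `C(n,-1) = 0`). -/
def mult (n r : ℕ) : ℕ := n.choose r - if r = 0 then 0 else n.choose (r - 1)

/-- The multiplicities telescope because `C(n,r-1) ≤ C(n,r)` for `r ≤ n/2`. -/
lemma sum_range_mult_eq_choose {n m : ℕ} (h : m ≤ n / 2) :
    ∑ r ∈ Finset.range (m + 1), mult n r = n.choose m := by
  induction m with
  | zero => simp [mult]
  | succ m ih =>
    rw [Finset.sum_range_succ, ih (by omega)]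
    have hle : n.choose m ≤ n.choose (m + 1) := Nat.choose_le_succ_of_lt_half_left (by omega)
    simp only [mult, Nat.succ_ne_zero, if_false, Nat.add_sub_cancel]
    omega

lemma sum_range_mult_min_eq_choose {n k : ℕ} (hk : k ≤ n) :
    ∑ r ∈ Finset.range (min k (n - k) + 1), mult n r = n.choose k := by
  rcases le_total k (n - k) with h | h
  · rw [min_eq_left h, sum_range_mult_eq_choose (by omega)]
  · rw [min_eq_right h, sum_range_mult_eq_choose (by omega), Nat.choose_symm hk]

lemma mul_pow_mul_sum_range_eq_sum_Icc {R : Type*} [CommSemiring R] (a b : R) {n r : ℕ}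
    (hr : 2 * r ≤ n) :
    (a * b) ^ r * ∑ j ∈ Finset.range (n - 2 * r + 1), a ^ j * b ^ (n - 2 * r - j) =
      ∑ k ∈ Finset.Icc r (n - r), a ^ k * b ^ (n - k) := by
  rw [← Finset.Ico_add_one_right_eq_Icc, Finset.sum_Ico_eq_sum_range, Finset.mul_sum,
    show n - r + 1 - r = n - 2 * r + 1 by omega]
  refine Finset.sum_congr rfl fun j hj => ?_
  obtain ⟨c, rfl⟩ : ∃ c, n = 2 * r + j + c := ⟨n - 2 * r - j, by simp at hj; omega⟩
  rw [show 2 * r + j + c - 2 * r - j = c by omega, show 2 * r + j + c - (r + j) = r + c by omega]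
  ring

theorem stmt2_general {R : Type*} [CommRing R] (a b : R) (n : ℕ) :
    ∑ r ∈ Finset.range (n / 2 + 1),
      (mult n r : R) * (a * b) ^ r *
        ∑ j ∈ Finset.range (n - 2 * r + 1), a ^ j * b ^ (n - 2 * r - j) =
    (a + b) ^ n := by
  calc _ = ∑ r ∈ Finset.range (n / 2 + 1), ∑ k ∈ Finset.Icc r (n - r),
          (mult n r : R) * (a ^ k * b ^ (n - k)) := by
        refine Finset.sum_congr rfl fun r hr => ?_
        rw [mul_assoc, mul_pow_mul_sum_range_eq_sum_Icc a b (by simp at hr; omega),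
          Finset.mul_sum]
    _ = ∑ k ∈ Finset.range (n + 1), ∑ r ∈ Finset.range (min k (n - k) + 1),
          (mult n r : R) * (a ^ k * b ^ (n - k)) :=
        Finset.sum_comm' fun r k => by simp only [Finset.mem_range, Finset.mem_Icc]; omega
    _ = ∑ k ∈ Finset.range (n + 1), a ^ k * b ^ (n - k) * (n.choose k : R) := by
        refine Finset.sum_congr rfl fun k hk => ?_
        rw [← Finset.sum_mul, ← Nat.cast_sum,
          sum_range_mult_min_eq_choose (Finset.mem_range_succ_iff.mp hk), mul_comm]
    _ = (a + b) ^ n := (add_pow a b n).symm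

/-- The trace of the `n`-fold tensor power of a `2×2` matrix with eigenvalues `a, b`
equals the sum over two-row partitions `(n-r, r)` of `dim S_λ · s_λ(a,b)`. -/
theorem stmt2 {R : Type*} [CommRing R] (a b : R) (n : ℕ) (hn : 1 ≤ n) :
    ∑ r ∈ Finset.range (n / 2 + 1),
      (mult n r : R) * (a * b) ^ r *
        ∑ j ∈ Finset.range (n - 2 * r + 1), a ^ j * b ^ (n - 2 * r - j) =
    (a + b) ^ n :=
  stmt2_general a b n
end

section
/- For every m ∈ ℕ, the map S_m : M₂(ℂ) → M_{m+1}(ℂ) is multiplicative: S_m(1) = 1 and S_m(A·B) = S_m(A)·S_m(B) for all 2×2 complex matrices A and B; that is, S_m is a monoid homomorphism from 2×2 complex matrices to (m+1)×(m+1) complex matrices. -/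
/-
Write `S_m(A) = D T(A) D⁻¹` with `D = diag (√(k! (m - k)!))`. The entry `T(A)_{kj}` is the
coefficient of `x^k y^(m-k)` in `(a x + c y)^j (b x + d y)^(m-j)`, so `T(A)` is the matrix, in the
monomial basis of binary forms of degree `m`, of the substitution `x ↦ a x + c y, y ↦ b x + d y`.
Substitutions compose like the matrices, and the monomials are linearly independent, hence `T`
is multiplicative and unital, and so is its conjugate `S_m`.
-/

open Matrix BigOperators

noncomputable section

/-- The matrix `S_m(A)` of the `m`-th symmetric power representation of `GL(2)`. -/
def Sm (m : ℕ) (A : Matrix (Fin 2) (Fin 2) ℂ) :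
    Matrix (Fin (m + 1)) (Fin (m + 1)) ℂ :=
  Matrix.of fun k j =>
    (Real.sqrt ((Nat.factorial (k : ℕ) * Nat.factorial (m - (k : ℕ)) : ℝ) /
        (Nat.factorial (j : ℕ) * Nat.factorial (m - (j : ℕ)))) : ℂ) *
    ∑ p ∈ Finset.Icc ((k : ℕ) - (m - (j : ℕ))) (min (k : ℕ) (j : ℕ)),
      (Nat.choose (j : ℕ) p : ℂ) * (Nat.choose (m - (j : ℕ)) ((k : ℕ) - p) : ℂ) *
        A 0 0 ^ p * A 1 0 ^ ((j : ℕ) - p) * A 0 1 ^ ((k : ℕ) - p) *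
        A 1 1 ^ ((m - (j : ℕ)) - ((k : ℕ) - p))

namespace SymPow

open MvPolynomial Finset

variable {R : Type*} [CommSemiring R]

def columnForm (A : Matrix (Fin 2) (Fin 2) R) (i : Fin 2) : MvPolynomial (Fin 2) R :=
  C (A 0 i) * X 0 + C (A 1 i) * X 1

lemma bind₁_columnForm_mul (A B : Matrix (Fin 2) (Fin 2) R) :
    bind₁ (columnForm (A * B)) = (bind₁ (columnForm A)).comp (bind₁ (columnForm B)) := by
  rw [bind₁_comp_bind₁]
  congr 1
  funext i
  simp only [columnForm, map_add, map_mul, bind₁_X_right, bind₁_C_right, mul_apply,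
    Fin.sum_univ_two]
  ring

lemma columnForm_one : columnForm (1 : Matrix (Fin 2) (Fin 2) R) = X := by
  ext1 i
  fin_cases i <;> simp [columnForm, one_apply]

variable (m : ℕ)

variable (R) in
def homogMonomial (k : Fin (m + 1)) : MvPolynomial (Fin 2) R := X 0 ^ (k : ℕ) * X 1 ^ (m - k)

lemma linearIndependent_homogMonomial : LinearIndependent R (homogMonomial R m) := by
  have hinj : Function.Injective fun k : Fin (m + 1) =>
      Finsupp.single (0 : Fin 2) (k : ℕ) + Finsupp.single 1 (m - k) := by
    intro k l h
    simpa [Fin.ext_iff] using congrArg (fun s => s 0) h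
  convert (basisMonomials (Fin 2) R).linearIndependent.comp _ hinj using 1
  ext1 k
  simp [homogMonomial, X_pow_eq_monomial, monomial_mul]

def entry (A : Matrix (Fin 2) (Fin 2) R) (k j : ℕ) : R :=
  ∑ p ∈ Icc (k - (m - j)) (min k j),
    (Nat.choose j p : R) * (Nat.choose (m - j) (k - p) : R) *
      A 0 0 ^ p * A 1 0 ^ (j - p) * A 0 1 ^ (k - p) * A 1 1 ^ ((m - j) - (k - p))

def matrix (A : Matrix (Fin 2) (Fin 2) R) : Matrix (Fin (m + 1)) (Fin (m + 1)) R :=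
  of fun k j => entry m A k j

lemma bind₁_homogMonomial (A : Matrix (Fin 2) (Fin 2) R) (j : Fin (m + 1)) :
    bind₁ (columnForm A) (homogMonomial R m j) =
      ∑ k, matrix m A k j • homogMonomial R m k := by
  obtain ⟨j, hj⟩ := j
  simp only [homogMonomial, map_mul, map_pow, bind₁_X_right, columnForm, add_pow, sum_mul_sum,
    matrix, of_apply]
  rw [Fin.sum_univ_eq_sum_range (fun k => entry m A k j • (X 0 ^ k * X 1 ^ (m - k)))]
  simp only [entry, sum_smul]
  -- binomial terms are indexed by `(p, q)`, those of `entry` by `(k, p)` with `k = p + q`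
  rw [sum_sigma', sum_sigma']
  refine sum_nbij' (fun x => ⟨x.1 + x.2, x.1⟩) (fun x => ⟨x.2, x.1 - x.2⟩) ?_ ?_ ?_ ?_ ?_
  · rintro ⟨p, q⟩ h
    simp only [mem_sigma, mem_range, mem_Icc] at h ⊢
    omega
  · rintro ⟨k, p⟩ h
    simp only [mem_sigma, mem_range, mem_Icc] at h ⊢
    omega
  · rintro ⟨p, q⟩ -
    simp only [Nat.add_sub_cancel_left]
  · rintro ⟨k, p⟩ h
    simp only [mem_sigma, mem_range, mem_Icc] at h
    simp only [Sigma.mk.injEq, heq_eq_eq, and_true]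
    omega
  · rintro ⟨p, q⟩ h
    simp only [mem_sigma, mem_range] at h
    rw [Nat.add_sub_cancel_left, show m - (p + q) = (j - p) + (m - j - q) by omega, pow_add,
      smul_eq_C_mul]
    simp only [map_mul, map_pow, map_natCast]
    ring

lemma bind₁_sum_smul_homogMonomial (A : Matrix (Fin 2) (Fin 2) R) (c : Fin (m + 1) → R) :
    bind₁ (columnForm A) (∑ j, c j • homogMonomial R m j) =
      ∑ k, (matrix m A *ᵥ c) k • homogMonomial R m k := by
  simp only [map_sum, map_smul, bind₁_homogMonomial, smul_sum, smul_smul, mulVec, dotProduct,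
    sum_smul]
  rw [sum_comm]
  simp only [mul_comm]

lemma ext_of_sum_mulVec_smul_homogMonomial {M N : Matrix (Fin (m + 1)) (Fin (m + 1)) R}
    (h : ∀ c : Fin (m + 1) → R,
      ∑ k, (M *ᵥ c) k • homogMonomial R m k = ∑ k, (N *ᵥ c) k • homogMonomial R m k) :
    M = N := by
  ext k j
  simpa [mulVec_single_one] using
    Fintype.linearIndependent_iffₛ.mp (linearIndependent_homogMonomial m) _ _ (h (Pi.single j 1)) k

lemma matrix_mul (A B : Matrix (Fin 2) (Fin 2) R) :
    matrix m (A * B) = matrix m A * matrix m B := by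
  refine ext_of_sum_mulVec_smul_homogMonomial m fun c => ?_
  rw [← mulVec_mulVec, ← bind₁_sum_smul_homogMonomial, bind₁_columnForm_mul, AlgHom.comp_apply,
    bind₁_sum_smul_homogMonomial, bind₁_sum_smul_homogMonomial]

lemma matrix_one : matrix m (1 : Matrix (Fin 2) (Fin 2) R) = 1 := by
  refine ext_of_sum_mulVec_smul_homogMonomial m fun c => ?_
  rw [one_mulVec, ← bind₁_sum_smul_homogMonomial, columnForm_one, bind₁_X_left, AlgHom.id_apply]

end SymPow

def factorialWeight (m : ℕ) (k : Fin (m + 1)) : ℂ :=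
  (Real.sqrt ((Nat.factorial (k : ℕ) : ℝ) * Nat.factorial (m - (k : ℕ))) : ℂ)

lemma factorialWeight_ne_zero (m : ℕ) (k : Fin (m + 1)) : factorialWeight m k ≠ 0 := by
  rw [factorialWeight, Complex.ofReal_ne_zero, Real.sqrt_ne_zero']
  positivity

lemma Sm_eq_diagonal_mul_symPow_mul_diagonal (m : ℕ) (A : Matrix (Fin 2) (Fin 2) ℂ) :
    Sm m A =
      diagonal (factorialWeight m) * SymPow.matrix m A * diagonal (factorialWeight m)⁻¹ := by
  ext k j
  rw [mul_diagonal, diagonal_mul, Sm, of_apply, Real.sqrt_div' _ (by positivity),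
    Complex.ofReal_div, Pi.inv_apply, div_eq_mul_inv]
  simp only [SymPow.matrix, SymPow.entry, of_apply, factorialWeight]
  ring

/-- `S_m` is multiplicative: it is a monoid homomorphism from `2×2` complex matrices to
`(m+1)×(m+1)` complex matrices. -/
theorem stmt5 (m : ℕ) :
    Sm m 1 = 1 ∧ ∀ A B : Matrix (Fin 2) (Fin 2) ℂ, Sm m (A * B) = Sm m A * Sm m B := by
  have hinv : diagonal (factorialWeight m)⁻¹ * diagonal (factorialWeight m) = 1 := by
    rw [diagonal_mul_diagonal, ← diagonal_one]
    exact congrArg diagonal (funext fun k => inv_mul_cancel₀ (factorialWeight_ne_zero m k))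
  refine ⟨?_, fun A B => ?_⟩
  · rw [Sm_eq_diagonal_mul_symPow_mul_diagonal, SymPow.matrix_one, Matrix.mul_one,
      mul_eq_one_comm.mp hinv]
  · simp only [Sm_eq_diagonal_mul_symPow_mul_diagonal, SymPow.matrix_mul, Matrix.mul_assoc]
    rw [← Matrix.mul_assoc (diagonal (factorialWeight m)⁻¹), hinv, Matrix.one_mul]

end
end

section
/- For every m ∈ ℕ and every 2×2 complex matrix A, S_m(Aᴴ) = (S_m(A))ᴴ, where ᴴ denotes the conjugate transpose. In particular, if A is unitary then S_m(A) is unitary, and if A is Hermitian then S_m(A) is Hermitian. -/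
open Matrix BigOperators

noncomputable section

namespace SmAux

open Finset MvPolynomial


abbrev P2 := MvPolynomial (Fin 2) ℂ

def φ (A : Matrix (Fin 2) (Fin 2) ℂ) : P2 →ₐ[ℂ] P2 :=
  aeval fun i => MvPolynomial.C (A 0 i) * X 0 + MvPolynomial.C (A 1 i) * X 1

lemma φ_comp (A B : Matrix (Fin 2) (Fin 2) ℂ) : (φ A).comp (φ B) = φ (A * B) := by
  apply MvPolynomial.algHom_ext
  intro i
  simp [φ, Matrix.mul_apply, Fin.sum_univ_two]
  ring

def K (m k : ℕ) : Fin 2 →₀ ℕ := Finsupp.single 0 k + Finsupp.single 1 (m - k)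

def cf (m : ℕ) (A : Matrix (Fin 2) (Fin 2) ℂ) (k j : ℕ) : ℂ :=
  coeff (K m k) (φ A (X 0 ^ j * X 1 ^ (m - j)))

lemma coeff_XX (k l p q : ℕ) :
    coeff (Finsupp.single 0 k + Finsupp.single 1 l) ((X 0 : P2) ^ p * X 1 ^ q) =
    if p = k ∧ q = l then 1 else 0 := by
  rw [X_pow_eq_monomial, X_pow_eq_monomial, monomial_mul, one_mul, coeff_monomial]
  congr 1
  simp only [eq_iff_iff]
  constructor
  · intro h
    have h0 := DFunLike.congr_fun h (0 : Fin 2)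
    have h1 := DFunLike.congr_fun h (1 : Fin 2)
    simp [Finsupp.single_apply] at h0 h1
    exact ⟨h0, h1⟩
  · rintro ⟨rfl, rfl⟩; rfl

def coefT (B : Matrix (Fin 2) (Fin 2) ℂ) (j n p q : ℕ) : ℂ :=
  (j.choose p : ℂ) * ((n.choose q : ℕ) : ℂ) * B 0 0 ^ p * B 1 0 ^ (j - p) *
    B 0 1 ^ q * B 1 1 ^ (n - q)

lemma phi_expand (B : Matrix (Fin 2) (Fin 2) ℂ) (j n : ℕ) :
    φ B (X 0 ^ j * X 1 ^ n) =
      ∑ p ∈ range (j + 1), ∑ q ∈ range (n + 1),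
        MvPolynomial.C (coefT B j n p q) * ((X 0 : P2) ^ (p + q) * X 1 ^ ((j - p) + (n - q))) := by
  have h : φ B (X 0 ^ j * X 1 ^ n) =
      (MvPolynomial.C (B 0 0) * X 0 + MvPolynomial.C (B 1 0) * X 1) ^ j *
      (MvPolynomial.C (B 0 1) * X 0 + MvPolynomial.C (B 1 1) * X 1) ^ n := by
    simp [φ]
  rw [h, add_pow, add_pow, Finset.sum_mul_sum]
  refine Finset.sum_congr rfl fun p hp => Finset.sum_congr rfl fun q hq => ?_
  simp only [coefT, _root_.map_mul, map_pow, map_natCast]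
  ring

lemma cf_as_dsum (m j l : ℕ) (hj : j ≤ m) (hl : l ≤ m) (B : Matrix (Fin 2) (Fin 2) ℂ) :
    cf m B l j = ∑ p ∈ range (j + 1), ∑ q ∈ range (m - j + 1),
      (if p + q = l then coefT B j (m - j) p q else 0) := by
  rw [cf, phi_expand]
  rw [coeff_sum]
  refine Finset.sum_congr rfl fun p hp => ?_
  rw [coeff_sum]
  refine Finset.sum_congr rfl fun q hq => ?_
  simp only [mem_range] at hp hq
  rw [coeff_C_mul, K, coeff_XX]
  have : (p + q = l ∧ (j - p) + (m - j - q) = m - l) ↔ p + q = l := by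
    constructor
    · exact fun h => h.1
    · intro h; exact ⟨h, by omega⟩
  rw [if_congr this rfl rfl]
  split <;> simp

lemma cf_eq (m k j : ℕ) (hk : k ≤ m) (hj : j ≤ m) (A : Matrix (Fin 2) (Fin 2) ℂ) :
    cf m A k j = ∑ p ∈ Finset.Icc (k - (m - j)) (min k j),
      (Nat.choose j p : ℂ) * (Nat.choose (m - j) (k - p) : ℂ) *
        A 0 0 ^ p * A 1 0 ^ (j - p) * A 0 1 ^ (k - p) *
        A 1 1 ^ ((m - j) - (k - p)) := by
  rw [cf_as_dsum m j k hj hk]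
  have step1 : ∀ p ∈ range (j + 1),
      (∑ q ∈ range (m - j + 1), (if p + q = k then coefT A j (m - j) p q else 0)) =
      (if p ∈ Finset.Icc (k - (m - j)) (min k j) then coefT A j (m - j) p (k - p) else 0) := by
    intro p hp
    simp only [mem_range] at hp
    by_cases hmem : p ∈ Finset.Icc (k - (m - j)) (min k j)
    · simp only [Finset.mem_Icc] at hmem
      rw [if_pos (by simp only [Finset.mem_Icc]; exact hmem)]
      rw [Finset.sum_eq_single (k - p)]
      · rw [if_pos (by omega)]
      · intro q hq hne
        rw [if_neg (by omega)]
      · intro hq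
        exfalso; simp only [mem_range] at hq; omega
    · simp only [Finset.mem_Icc, not_and_or, not_le] at hmem
      rw [if_neg (by simp only [Finset.mem_Icc, not_and_or, not_le]; exact hmem)]
      apply Finset.sum_eq_zero
      intro q hq
      simp only [mem_range] at hq
      rw [if_neg (by omega)]
  rw [Finset.sum_congr rfl step1, Finset.sum_ite_mem]
  rw [Finset.inter_eq_right.mpr (by
    intro p hp
    simp only [Finset.mem_Icc] at hp
    simp only [mem_range]
    omega)]
  refine Finset.sum_congr rfl fun p hp => ?_
  simp only [Finset.mem_Icc] at hp
  rw [coefT]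

lemma phi_mon_expand (m j : ℕ) (hj : j ≤ m) (B : Matrix (Fin 2) (Fin 2) ℂ) :
    φ B (X 0 ^ j * X 1 ^ (m - j)) =
      ∑ l ∈ range (m + 1), MvPolynomial.C (cf m B l j) * ((X 0 : P2) ^ l * X 1 ^ (m - l)) := by
  have hcf : ∀ l ∈ range (m + 1), MvPolynomial.C (cf m B l j) * ((X 0 : P2) ^ l * X 1 ^ (m - l))
      = ∑ p ∈ range (j + 1), ∑ q ∈ range (m - j + 1),
          (if p + q = l then MvPolynomial.C (coefT B j (m - j) p q) *
            ((X 0 : P2) ^ l * X 1 ^ (m - l)) else 0) := by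
    intro l hl
    simp only [mem_range] at hl
    rw [cf_as_dsum m j l hj (by omega), map_sum, Finset.sum_mul]
    refine Finset.sum_congr rfl fun p hp => ?_
    rw [map_sum, Finset.sum_mul]
    refine Finset.sum_congr rfl fun q hq => ?_
    split <;> simp
  rw [Finset.sum_congr rfl hcf]
  rw [Finset.sum_comm]
  rw [phi_expand]
  refine Finset.sum_congr rfl fun p hp => ?_
  rw [Finset.sum_comm]
  refine Finset.sum_congr rfl fun q hq => ?_
  simp only [mem_range] at hp hq
  rw [Finset.sum_ite_eq (range (m + 1)) (p + q)
    (fun l => MvPolynomial.C (coefT B j (m - j) p q) * ((X 0 : P2) ^ l * X 1 ^ (m - l)))]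
  rw [if_pos (by simp only [mem_range]; omega),
    show j - p + (m - j - q) = m - (p + q) by omega]

lemma cf_mul (m k j : ℕ) (hj : j ≤ m) (A B : Matrix (Fin 2) (Fin 2) ℂ) :
    cf m (A * B) k j = ∑ l ∈ range (m + 1), cf m A k l * cf m B l j := by
  have h1 : φ (A * B) (X 0 ^ j * X 1 ^ (m - j)) = φ A (φ B (X 0 ^ j * X 1 ^ (m - j))) := by
    rw [← φ_comp]; rfl
  rw [cf, h1, phi_mon_expand m j hj B, map_sum, coeff_sum]
  refine Finset.sum_congr rfl fun l hl => ?_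
  rw [_root_.map_mul, show (φ A) (MvPolynomial.C (cf m B l j)) = MvPolynomial.C (cf m B l j) by
    simp [φ], coeff_C_mul]
  rw [mul_comm]
  rfl

lemma cf_one (m k j : ℕ) (hk : k ≤ m) (hj : j ≤ m) :
    cf m (1 : Matrix (Fin 2) (Fin 2) ℂ) k j = if k = j then 1 else 0 := by
  have h : φ (1 : Matrix (Fin 2) (Fin 2) ℂ) (X 0 ^ j * X 1 ^ (m - j)) =
      (X 0 : P2) ^ j * X 1 ^ (m - j) := by
    simp [φ, Matrix.one_apply]
  rw [cf, h, K, coeff_XX]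
  congr 1
  simp only [eq_iff_iff]
  omega


lemma nat_ident (m k j p : ℕ) (hk : k ≤ m) (hj : j ≤ m) (hpk : p ≤ k) (hpj : p ≤ j)
    (h1 : k - p ≤ m - j) :
    k.factorial * (m-k).factorial * (j.choose p * (m-j).choose (k-p)) =
    j.factorial * (m-j).factorial * (k.choose p * (m-k).choose (j-p)) := by
  have h2 : j - p ≤ m - k := by omega
  have e1 := Nat.choose_mul_factorial_mul_factorial hpj
  have e2 := Nat.choose_mul_factorial_mul_factorial h1
  have e3 := Nat.choose_mul_factorial_mul_factorial hpk
  have e4 := Nat.choose_mul_factorial_mul_factorial h2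
  have hD : 0 < p.factorial * (j-p).factorial * ((k-p).factorial * ((m-j)-(k-p)).factorial) :=
    by positivity
  apply Nat.eq_of_mul_eq_mul_right hD
  have hex : (m-k)-(j-p) = (m-j)-(k-p) := by omega
  calc k.factorial * (m-k).factorial * (j.choose p * (m-j).choose (k-p)) *
        (p.factorial * (j-p).factorial * ((k-p).factorial * ((m-j)-(k-p)).factorial))
      = (k.factorial * (m-k).factorial) * ((j.choose p * p.factorial * (j-p).factorial) *
        ((m-j).choose (k-p) * (k-p).factorial * ((m-j)-(k-p)).factorial)) := by ring
    _ = (k.factorial * (m-k).factorial) * (j.factorial * (m-j).factorial) := by rw [e1, e2]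
    _ = (j.factorial * (m-j).factorial) * ((k.choose p * p.factorial * (k-p).factorial) *
        ((m-k).choose (j-p) * (j-p).factorial * ((m-k)-(j-p)).factorial)) := by
        rw [e3, e4]; ring
    _ = _ := by rw [hex]; ring

lemma sqrt_bridge (x y c1 c2 : ℝ) (hx : 0 < x) (hy : 0 < y) (h : x * c1 = y * c2) :
    Real.sqrt (x/y) * c1 = Real.sqrt (y/x) * c2 := by
  rw [Real.sqrt_div hx.le, Real.sqrt_div hy.le]
  have sx : Real.sqrt x ^ 2 = x := Real.sq_sqrt hx.le
  have sy : Real.sqrt y ^ 2 = y := Real.sq_sqrt hy.le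
  have hsx : 0 < Real.sqrt x := Real.sqrt_pos.2 hx
  have hsy : 0 < Real.sqrt y := Real.sqrt_pos.2 hy
  rw [div_mul_eq_mul_div, div_mul_eq_mul_div, div_eq_div_iff hsy.ne' hsx.ne']
  have e1 : Real.sqrt x * c1 * Real.sqrt x = x * c1 := by
    rw [mul_comm (Real.sqrt x) c1, mul_assoc, Real.mul_self_sqrt hx.le]; ring
  have e2 : Real.sqrt y * c2 * Real.sqrt y = y * c2 := by
    rw [mul_comm (Real.sqrt y) c2, mul_assoc, Real.mul_self_sqrt hy.le]; ring
  rw [e1, e2, h]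

lemma Sm_conjTranspose (m : ℕ) (A : Matrix (Fin 2) (Fin 2) ℂ) :
    Sm m Aᴴ = (Sm m A)ᴴ := by
  ext k j
  have hk : (k : ℕ) ≤ m := Nat.lt_succ_iff.mp k.isLt
  have hj : (j : ℕ) ≤ m := Nat.lt_succ_iff.mp j.isLt
  simp only [Sm, conjTranspose_apply, Matrix.of_apply, star_mul', star_sum, 
    star_pow, Complex.star_def, Complex.conj_ofReal, map_natCast]
  rw [show Finset.Icc ((j:ℕ) - (m - (k:ℕ))) (min (j:ℕ) (k:ℕ))
      = Finset.Icc ((k:ℕ) - (m - (j:ℕ))) (min (k:ℕ) (j:ℕ)) by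
    congr 1 <;> omega]
  rw [Finset.mul_sum, Finset.mul_sum]
  refine Finset.sum_congr rfl fun p hp => ?_
  simp only [Finset.mem_Icc] at hp
  have hpk : p ≤ (k:ℕ) := le_trans hp.2 (min_le_left _ _)
  have hpj : p ≤ (j:ℕ) := le_trans hp.2 (min_le_right _ _)
  have h1 : (k:ℕ) - p ≤ m - (j:ℕ) := by omega
  have hexp : (m - (j:ℕ)) - ((k:ℕ) - p) = (m - (k:ℕ)) - ((j:ℕ) - p) := by omega
  have hxpos : (0:ℝ) < (Nat.factorial (k:ℕ) * Nat.factorial (m - (k:ℕ)) : ℝ) := by positivity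
  have hypos : (0:ℝ) < (Nat.factorial (j:ℕ) * Nat.factorial (m - (j:ℕ)) : ℝ) := by positivity
  have hr : Real.sqrt ((Nat.factorial (k:ℕ) * Nat.factorial (m - (k:ℕ)) : ℝ) /
        (Nat.factorial (j:ℕ) * Nat.factorial (m - (j:ℕ)))) *
        ((Nat.choose (j:ℕ) p * Nat.choose (m - (j:ℕ)) ((k:ℕ) - p) : ℕ) : ℝ)
      = Real.sqrt ((Nat.factorial (j:ℕ) * Nat.factorial (m - (j:ℕ)) : ℝ) /
        (Nat.factorial (k:ℕ) * Nat.factorial (m - (k:ℕ)))) *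
        ((Nat.choose (k:ℕ) p * Nat.choose (m - (k:ℕ)) ((j:ℕ) - p) : ℕ) : ℝ) := by
    apply sqrt_bridge _ _ _ _ hxpos hypos
    have := nat_ident m (k:ℕ) (j:ℕ) p hk hj hpk hpj h1
    push_cast
    exact_mod_cast congrArg (Nat.cast : ℕ → ℝ) this
  have hrC : (Real.sqrt ((Nat.factorial (k:ℕ) * Nat.factorial (m - (k:ℕ)) : ℝ) /
        (Nat.factorial (j:ℕ) * Nat.factorial (m - (j:ℕ)))) : ℂ) *
        ((Nat.choose (j:ℕ) p : ℂ) * (Nat.choose (m - (j:ℕ)) ((k:ℕ) - p) : ℂ))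
      = (Real.sqrt ((Nat.factorial (j:ℕ) * Nat.factorial (m - (j:ℕ)) : ℝ) /
        (Nat.factorial (k:ℕ) * Nat.factorial (m - (k:ℕ)))) : ℂ) *
        ((Nat.choose (k:ℕ) p : ℂ) * (Nat.choose (m - (k:ℕ)) ((j:ℕ) - p) : ℂ)) := by
    exact_mod_cast congrArg (Complex.ofReal) hr
  rw [hexp]
  linear_combination ((starRingEnd ℂ) (A 0 0) ^ p *
    (starRingEnd ℂ) (A 0 1) ^ ((j:ℕ) - p) * (starRingEnd ℂ) (A 1 0) ^ ((k:ℕ) - p) *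
    (starRingEnd ℂ) (A 1 1) ^ ((m - (k:ℕ)) - ((j:ℕ) - p))) * hrC

lemma Sm_eq (m : ℕ) (A : Matrix (Fin 2) (Fin 2) ℂ) (k j : Fin (m + 1)) :
    Sm m A k j =
      ((Real.sqrt (Nat.factorial (k : ℕ) * Nat.factorial (m - (k : ℕ))) : ℂ) /
        (Real.sqrt (Nat.factorial (j : ℕ) * Nat.factorial (m - (j : ℕ))) : ℂ)) *
        cf m A (k : ℕ) (j : ℕ) := by
  have hk : (k : ℕ) ≤ m := Nat.lt_succ_iff.mp k.isLt
  have hj : (j : ℕ) ≤ m := Nat.lt_succ_iff.mp j.isLt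
  rw [cf_eq m (k : ℕ) (j : ℕ) hk hj A]
  simp only [Sm, Matrix.of_apply]
  congr 1
  rw [Real.sqrt_div (by positivity)]
  push_cast
  ring

lemma sqrt_fact_ne_zero (m l : ℕ) :
    (Real.sqrt (Nat.factorial l * Nat.factorial (m - l)) : ℂ) ≠ 0 := by
  have : (0:ℝ) < Real.sqrt (Nat.factorial l * Nat.factorial (m - l)) := by
    apply Real.sqrt_pos.2; positivity
  exact_mod_cast this.ne'

lemma Sm_mul (m : ℕ) (A B : Matrix (Fin 2) (Fin 2) ℂ) :
    Sm m (A * B) = Sm m A * Sm m B := by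
  ext k j
  have hj : (j : ℕ) ≤ m := Nat.lt_succ_iff.mp j.isLt
  rw [Matrix.mul_apply, Sm_eq, cf_mul m (k : ℕ) (j : ℕ) hj A B, Finset.mul_sum]
  rw [← Fin.sum_univ_eq_sum_range (fun l =>
    ((Real.sqrt (Nat.factorial (k : ℕ) * Nat.factorial (m - (k : ℕ))) : ℂ) /
      (Real.sqrt (Nat.factorial (j : ℕ) * Nat.factorial (m - (j : ℕ))) : ℂ)) *
      (cf m A (k : ℕ) l * cf m B l (j : ℕ)))]
  refine Finset.sum_congr rfl fun l _ => ?_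
  rw [Sm_eq, Sm_eq]
  have key : ∀ (x y z a b : ℂ), y ≠ 0 → (x / y * a) * (y / z * b) = x / z * (a * b) := by
    intro x y z a b hy
    field_simp
  exact (key _ _ _ _ _ (sqrt_fact_ne_zero m (l : ℕ))).symm

lemma Sm_one (m : ℕ) : Sm m (1 : Matrix (Fin 2) (Fin 2) ℂ) = 1 := by
  ext k j
  have hk : (k : ℕ) ≤ m := Nat.lt_succ_iff.mp k.isLt
  have hj : (j : ℕ) ≤ m := Nat.lt_succ_iff.mp j.isLt
  rw [Sm_eq, cf_one m (k : ℕ) (j : ℕ) hk hj, Matrix.one_apply]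
  by_cases h : k = j
  · subst h
    rw [if_pos rfl, if_pos rfl, mul_one, div_self (sqrt_fact_ne_zero m (k : ℕ))]
  · rw [if_neg (fun hh => h (Fin.ext hh)), if_neg h, mul_zero]

end SmAux

/-- `S_m` commutes with conjugate transpose; in particular it sends unitaries to unitaries
and Hermitian matrices to Hermitian matrices. -/
theorem stmt6 (m : ℕ) (A : Matrix (Fin 2) (Fin 2) ℂ) :
    Sm m Aᴴ = (Sm m A)ᴴ ∧
    (A ∈ Matrix.unitaryGroup (Fin 2) ℂ → Sm m A ∈ Matrix.unitaryGroup (Fin (m + 1)) ℂ) ∧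
    (A.IsHermitian → (Sm m A).IsHermitian) := by
  refine ⟨SmAux.Sm_conjTranspose m A, ?_, ?_⟩
  · intro hA
    rw [Matrix.mem_unitaryGroup_iff]
    have h1 : A * star A = 1 := Matrix.mem_unitaryGroup_iff.mp hA
    have h2 : star (Sm m A) = Sm m Aᴴ := by
      rw [Matrix.star_eq_conjTranspose, SmAux.Sm_conjTranspose]
    rw [h2, ← Matrix.star_eq_conjTranspose, ← SmAux.Sm_mul, h1, SmAux.Sm_one]
  · intro hA
    unfold Matrix.IsHermitian
    rw [← SmAux.Sm_conjTranspose, hA]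

end
end

section
/- Let p : Fin 4 → ℝ be a probability vector, x ∈ [0,1], and Φₙ the n-fold product channel of the Pauli channel 𝒩_p. Let M be the matrix indexed by Fin 2 × (Fin n → Fin 2) with entries M((i,s),(j,t)) = √(xᵢ·xⱼ)·Φₙ(E_{ij})(s,t), where x₀ = x, x₁ = 1−x, and E_{ij} is the matrix unit whose only nonzero entry is a 1 at position (the constant-i string, the constant-j string). Then the characteristic polynomial of M equals ∏_{w=0}^{n} (X² − a_w·X + x(1−x)·(a_w² − b_w²))^{C(n,w)}, where a_w = (p₀+p₃)^{n−w}(p₁+p₂)^{w} and b_w = (p₀−p₃)^{n−w}(p₁−p₂)^{w}. Equivalently, the eigenvalues of M are y_±(w) = (a_w ± √(((2x−1)·a_w)² + 4x(1−x)·b_w²))/2, each with multiplicity C(n,w). -/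
open Matrix BigOperators Polynomial

noncomputable section

/-- Matrix of the Kraus operator `K_u` acting on `n` systems. -/
def krausAt {ι : Type*} {d n : ℕ} (K : ι → Matrix (Fin d) (Fin d) ℂ) (u : Fin n → ι) :
    Matrix (Fin n → Fin d) (Fin n → Fin d) ℂ :=
  Matrix.of fun s t => ∏ i, K (u i) (s i) (t i)

/-- The n-fold product (i.i.d.) channel of the Kraus operators `K`. -/
def prodChannel {ι : Type*} [Fintype ι] {d : ℕ} (K : ι → Matrix (Fin d) (Fin d) ℂ) (n : ℕ)
    (ρ : Matrix (Fin n → Fin d) (Fin n → Fin d) ℂ) :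
    Matrix (Fin n → Fin d) (Fin n → Fin d) ℂ :=
  ∑ u : Fin n → ι, krausAt K u * ρ * (krausAt K u)ᴴ

/-- The Pauli matrices. -/
def pauli : Fin 4 → Matrix (Fin 2) (Fin 2) ℂ
  | 0 => 1
  | 1 => !![0, 1; 1, 0]
  | 2 => !![0, -Complex.I; Complex.I, 0]
  | 3 => !![1, 0; 0, -1]

/-- Kraus operators of the Pauli channel with probabilities `p`. -/
def pauliKraus (p : Fin 4 → ℝ) (i : Fin 4) : Matrix (Fin 2) (Fin 2) ℂ :=
  (Real.sqrt (p i) : ℂ) • pauli i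

section helpers
variable {n : ℕ}

lemma fin2_cases (a : Fin 2) : a = 0 ∨ a = 1 := by fin_cases a <;> simp

def wt {n : ℕ} (s : Fin n → Fin 2) : ℕ := (Finset.univ.filter fun i => s i = 1).card

lemma wt_le (s : Fin n → Fin 2) : wt s ≤ n := by
  calc wt s ≤ (Finset.univ : Finset (Fin n)).card := Finset.card_filter_le _ _
  _ = n := Finset.card_univ.trans (Fintype.card_fin n)

lemma card_filter_zero (s : Fin n → Fin 2) :
    (Finset.univ.filter fun k => s k = 0).card = n - wt s := by
  have h1 : (Finset.univ.filter fun k => s k = 0) =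
      (Finset.univ.filter fun k => ¬ s k = 1) :=
    Finset.filter_congr fun k _ => by rcases fin2_cases (s k) with h | h <;> simp [h]
  have h2 := Finset.card_filter_add_card_filter_not
    (s := (Finset.univ : Finset (Fin n))) (p := fun k => s k = 1)
  rw [Finset.card_univ, Fintype.card_fin] at h2
  rw [h1]; unfold wt at *; omega

lemma prod_ite_zero (s : Fin n → Fin 2) (A B : ℂ) :
    (∏ k, if s k = 0 then A else B) = A ^ (n - wt s) * B ^ wt s := by
  rw [Finset.prod_ite, Finset.prod_const, Finset.prod_const, card_filter_zero]
  congr 2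
  rw [show (Finset.univ.filter fun k => ¬ s k = 0) =
      (Finset.univ.filter fun k => s k = 1) from
    Finset.filter_congr fun k _ => by rcases fin2_cases (s k) with h | h <;> simp [h]]
  rfl

lemma prod_ite_one (s : Fin n → Fin 2) (A B : ℂ) :
    (∏ k, if s k = 1 then A else B) = A ^ wt s * B ^ (n - wt s) := by
  rw [Finset.prod_ite, Finset.prod_const, Finset.prod_const]
  rw [show (Finset.univ.filter fun k => ¬ s k = 1) =
      (Finset.univ.filter fun k => s k = 0) from
    Finset.filter_congr fun k _ => by rcases fin2_cases (s k) with h | h <;> simp [h],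
    card_filter_zero]
  rfl

def cpl {n : ℕ} (s : Fin n → Fin 2) : Fin n → Fin 2 := fun k => s k + 1

lemma cpl_cpl (s : Fin n → Fin 2) : cpl (cpl s) = s := by
  funext k; show s k + 1 + 1 = s k; generalize s k = a; revert a; decide

lemma cpl_inj {s t : Fin n → Fin 2} (h : cpl s = cpl t) : s = t := by
  rw [← cpl_cpl s, h, cpl_cpl]

lemma wt_cpl (s : Fin n → Fin 2) : wt (cpl s) = n - wt s := by
  rw [← card_filter_zero]
  unfold wt cpl
  congr 1
  exact Finset.filter_congr fun k _ => by rcases fin2_cases (s k) with h | h <;> simp [h]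

lemma card_wt (n w : ℕ) :
    ((Finset.univ : Finset (Fin n → Fin 2)).filter fun s => wt s = w).card = n.choose w := by
  classical
  rw [show n.choose w = ((Finset.univ : Finset (Fin n)).powersetCard w).card by
    rw [Finset.card_powersetCard, Finset.card_univ, Fintype.card_fin]]
  apply Finset.card_bij (fun s _ => Finset.univ.filter fun i => s i = 1)
  · intro s hs
    simp only [Finset.mem_filter] at hs
    simp [Finset.mem_powersetCard, hs.2, wt] at *
    exact hs
  · intro s hs t ht hst
    funext i
    have h1 : s i = 1 ↔ t i = 1 := by
      constructor <;> intro h <;>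
        [have := (Finset.ext_iff.mp hst i).mp; have := (Finset.ext_iff.mp hst i).mpr] <;>
        simpa [h] using this (by simp [h])
    revert h1; generalize s i = a; generalize t i = b; revert a b; decide
  · intro A hA
    refine ⟨fun i => if i ∈ A then 1 else 0, ?_, ?_⟩
    · simp only [Finset.mem_filter, Finset.mem_univ, true_and, wt]
      rw [Finset.mem_powersetCard] at hA
      rw [← hA.2]
      refine Finset.mem_filter.mpr ⟨Finset.mem_univ _, ?_⟩
      congr 1
      ext i
      simp only [Finset.mem_filter, Finset.mem_univ, true_and]
      split <;> simp_all
    · ext i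
      simp only [Finset.mem_filter, Finset.mem_univ, true_and]
      split <;> simp_all

end helpers

lemma my_charpoly_fin_two (A : Matrix (Fin 2) (Fin 2) ℂ) :
    A.charpoly = X ^ 2 - C (A 0 0 + A 1 1) * X + C (A 0 0 * A 1 1 - A 0 1 * A 1 0) := by
  rw [Matrix.charpoly, Matrix.det_fin_two, charmatrix_apply_eq, charmatrix_apply_eq,
    charmatrix_apply_ne _ _ _ (by decide), charmatrix_apply_ne _ _ _ (by decide)]
  simp only [map_add, map_sub, _root_.map_mul]
  ring

lemma my_charmatrix_blockDiagonal {o m : Type*} [Fintype o] [DecidableEq o] [Fintype m]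
    [DecidableEq m] (B : o → Matrix m m ℂ) :
    charmatrix (blockDiagonal B) = blockDiagonal fun s => charmatrix (B s) := by
  ext ⟨i, s⟩ ⟨j, t⟩
  rcases eq_or_ne (⟨i,s⟩ : m × o) ⟨j,t⟩ with h | h
  · cases h
    simp [blockDiagonal_apply]
  · rw [charmatrix_apply_ne _ _ _ h]
    simp only [blockDiagonal_apply]
    rcases eq_or_ne s t with rfl | hst
    · have hij : i ≠ j := fun hij => h (by rw [hij])
      simp [charmatrix_apply_ne _ _ _ hij]
    · simp [hst]

lemma my_charpoly_blockDiagonal {o m : Type*} [Fintype o] [DecidableEq o] [Fintype m]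
    [DecidableEq m] (B : o → Matrix m m ℂ) :
    (blockDiagonal B).charpoly = ∏ s, (B s).charpoly := by
  rw [Matrix.charpoly, my_charmatrix_blockDiagonal, det_blockDiagonal]
  rfl


def T (p : Fin 4 → ℝ) (i j a b : Fin 2) : ℂ :=
  ∑ m : Fin 4, (p m : ℂ) * pauli m a i * (starRingEnd ℂ) (pauli m b j)

def T' (p : Fin 4 → ℝ) (i j a b : Fin 2) : ℂ :=
  if i = j then
    (if a = b then (if a = i then ((p 0 + p 3 : ℝ) : ℂ) else ((p 1 + p 2 : ℝ) : ℂ)) else 0)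
  else
    (if a = i ∧ b = j then ((p 0 - p 3 : ℝ) : ℂ)
     else if a = j ∧ b = i then ((p 1 - p 2 : ℝ) : ℂ) else 0)

lemma T_eq_T' (p : Fin 4 → ℝ) (i j a b : Fin 2) : T p i j a b = T' p i j a b := by
  fin_cases i <;> fin_cases j <;> fin_cases a <;> fin_cases b <;>
    simp [T, T', pauli, Fin.sum_univ_four, Matrix.one_apply, Complex.ext_iff] <;> ring

lemma entry_eq (p : Fin 4 → ℝ) (hp : ∀ i, 0 ≤ p i) (n : ℕ) (i j : Fin 2)
    (s t : Fin n → Fin 2) :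
    prodChannel (pauliKraus p) n (Matrix.single (fun _ => i) (fun _ => j) 1) s t
      = ∏ k, T' p i j (s k) (t k) := by
  have key : ∀ a b : Fin 2, ∑ m : Fin 4,
      pauliKraus p m a i * (starRingEnd ℂ) (pauliKraus p m b j) = T' p i j a b := by
    intro a b
    rw [← T_eq_T']
    refine Finset.sum_congr rfl fun m _ => ?_
    simp only [pauliKraus, Matrix.smul_apply, smul_eq_mul, _root_.map_mul, Complex.conj_ofReal]
    rw [show ((Real.sqrt (p m) : ℂ)) * pauli m a i * ((Real.sqrt (p m) : ℂ) *
        (starRingEnd ℂ) (pauli m b j)) = ((Real.sqrt (p m) * Real.sqrt (p m) : ℝ) : ℂ) *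
        pauli m a i * (starRingEnd ℂ) (pauli m b j) by push_cast; ring,
      Real.mul_self_sqrt (hp m)]
  calc prodChannel (pauliKraus p) n (Matrix.single (fun _ => i) (fun _ => j) 1) s t
      = ∑ u : Fin n → Fin 4, ∏ k, (pauliKraus p (u k) (s k) i *
          (starRingEnd ℂ) (pauliKraus p (u k) (t k) j)) := by
        rw [prodChannel, Matrix.sum_apply]
        refine Finset.sum_congr rfl fun u _ => ?_
        rw [Matrix.mul_apply]
        simp only [Matrix.conjTranspose_apply, Matrix.mul_apply, Matrix.single,
          Matrix.of_apply, mul_ite, mul_one, mul_zero, ite_and, Finset.sum_ite_eq,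
          Finset.mem_univ, if_true]
        simp only [ite_mul, zero_mul, Finset.sum_ite_eq, Finset.mem_univ, if_true, krausAt,
          Matrix.of_apply, RCLike.star_def]
        rw [map_prod, ← Finset.prod_mul_distrib]
    _ = ∏ k, ∑ m : Fin 4, (pauliKraus p m (s k) i *
          (starRingEnd ℂ) (pauliKraus p m (t k) j)) := by
        rw [Finset.prod_univ_sum]
        simp
    _ = ∏ k, T' p i j (s k) (t k) := Finset.prod_congr rfl fun k _ => key _ _


/-- The characteristic polynomial of the purified channel output `M` of the weighted
repetition code through `n` copies of the Pauli channel `𝒩_p` factors into quadratics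
`X² − a_w X + x(1−x)(a_w² − b_w²)`, each with multiplicity `C(n,w)`. -/
theorem stmt10 (p : Fin 4 → ℝ) (hp : ∀ i, 0 ≤ p i) (hp1 : ∑ i, p i = 1)
    (x : ℝ) (hx : x ∈ Set.Icc (0 : ℝ) 1) (n : ℕ)
    (M : Matrix (Fin 2 × (Fin n → Fin 2)) (Fin 2 × (Fin n → Fin 2)) ℂ)
    (hM : M = Matrix.of fun a b =>
      (Real.sqrt (![x, 1 - x] a.1 * ![x, 1 - x] b.1) : ℂ) *
        prodChannel (pauliKraus p) n
          (Matrix.single (fun _ => a.1) (fun _ => b.1) 1) a.2 b.2)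
    (aw bw : ℕ → ℝ)
    (haw : ∀ w, aw w = (p 0 + p 3) ^ (n - w) * (p 1 + p 2) ^ w)
    (hbw : ∀ w, bw w = (p 0 - p 3) ^ (n - w) * (p 1 - p 2) ^ w) :
    M.charpoly = ∏ w ∈ Finset.range (n + 1),
      (X ^ 2 - C ((aw w : ℝ) : ℂ) * X
        + C ((x * (1 - x) * ((aw w) ^ 2 - (bw w) ^ 2) : ℝ) : ℂ)) ^ n.choose w := by
  obtain ⟨hx0, hx1⟩ := hx
  have hx1' : 0 ≤ 1 - x := by linarith
  set r : ℝ := Real.sqrt (x * (1 - x)) with hr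
  set B : (Fin n → Fin 2) → Matrix (Fin 2) (Fin 2) ℂ := fun s =>
    !![(x : ℂ) * ((aw (wt s) : ℝ) : ℂ), (r : ℂ) * ((bw (wt s) : ℝ) : ℂ);
       (r : ℂ) * ((bw (wt s) : ℝ) : ℂ), ((1 - x : ℝ) : ℂ) * ((aw (wt s) : ℝ) : ℂ)] with hB
  set e : (Fin 2 × (Fin n → Fin 2)) ≃ (Fin 2 × (Fin n → Fin 2)) :=
    Function.Involutive.toPerm (fun a => (a.1, if a.1 = 0 then a.2 else cpl a.2))
      (by rintro ⟨i, s⟩; rcases fin2_cases i with rfl | rfl <;> simp [cpl_cpl]) with he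
  have he' : ∀ a, e a = (a.1, if a.1 = 0 then a.2 else cpl a.2) := fun _ => rfl
  have hcast_a : ∀ w : ℕ, ((aw w : ℝ) : ℂ) =
      ((p 0 + p 3 : ℝ) : ℂ) ^ (n - w) * ((p 1 + p 2 : ℝ) : ℂ) ^ w := by
    intro w; rw [haw]; push_cast; ring
  have hcast_b : ∀ w : ℕ, ((bw w : ℝ) : ℂ) =
      ((p 0 - p 3 : ℝ) : ℂ) ^ (n - w) * ((p 1 - p 2 : ℝ) : ℂ) ^ w := by
    intro w; rw [hbw]; push_cast; ring
  have hB00 : ∀ s, B s 0 0 = (x : ℂ) * ((aw (wt s) : ℝ) : ℂ) := fun s => by simp [hB]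
  have hB01 : ∀ s, B s 0 1 = (r : ℂ) * ((bw (wt s) : ℝ) : ℂ) := fun s => by simp [hB]
  have hB10 : ∀ s, B s 1 0 = (r : ℂ) * ((bw (wt s) : ℝ) : ℂ) := fun s => by simp [hB]
  have hB11 : ∀ s, B s 1 1 = ((1 - x : ℝ) : ℂ) * ((aw (wt s) : ℝ) : ℂ) := fun s => by
    simp [hB]
  have hMB : M = (blockDiagonal B).submatrix e e := by
    subst hM
    ext ⟨i, s⟩ ⟨j, t⟩
    rw [Matrix.submatrix_apply, Matrix.of_apply]
    show _ * prodChannel (pauliKraus p) n _ s t = _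
    rw [entry_eq p hp]
    fin_cases i <;> fin_cases j <;>
      simp only [he', Function.Involutive.coe_toPerm, Matrix.blockDiagonal_apply,
        Fin.mk_zero, Fin.mk_one, Fin.isValue, if_true, if_false, Matrix.cons_val_zero,
        Matrix.cons_val_one, Matrix.head_cons, reduceIte, one_ne_zero]
    · -- i = 0, j = 0
      rcases eq_or_ne s t with rfl | hst
      · rw [if_pos rfl, Real.sqrt_mul_self hx0, hB00,
          show (∏ k, T' p 0 0 (s k) (s k)) =
              ∏ k, if s k = 0 then ((p 0 + p 3 : ℝ) : ℂ) else ((p 1 + p 2 : ℝ) : ℂ) from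
            Finset.prod_congr rfl fun k _ => by
              rcases fin2_cases (s k) with h | h <;> simp [T', h],
          prod_ite_zero, ← hcast_a]
      · obtain ⟨k, hk⟩ := Function.ne_iff.mp hst
        rw [if_neg hst, Finset.prod_eq_zero (Finset.mem_univ k) (by simp [T', hk]), mul_zero]
    · -- i = 0, j = 1
      rcases eq_or_ne s (cpl t) with rfl | hst
      · rw [if_pos rfl, ← hr, hB01,
          show (∏ k, T' p 0 1 (cpl t k) (t k)) =
              ∏ k, if cpl t k = 0 then ((p 0 - p 3 : ℝ) : ℂ) else ((p 1 - p 2 : ℝ) : ℂ) from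
            Finset.prod_congr rfl fun k _ => by
              rcases fin2_cases (t k) with h | h <;> simp [T', cpl, h],
          prod_ite_zero, ← hcast_b]
      · have hst' : ∃ k, s k = t k := by
          obtain ⟨k, hk⟩ := Function.ne_iff.mp hst
          refine ⟨k, ?_⟩
          revert hk; show s k ≠ t k + 1 → _; generalize s k = a; generalize t k = b
          revert a b; decide
        obtain ⟨k, hk⟩ := hst'
        rw [if_neg hst, Finset.prod_eq_zero (Finset.mem_univ k) (by
          rw [hk]; rcases fin2_cases (t k) with h | h <;> simp [T', h]), mul_zero]
    · -- i = 1, j = 0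
      rcases eq_or_ne (cpl s) t with rfl | hst
      · rw [if_pos rfl, show (1 - x) * x = x * (1 - x) from mul_comm _ _, ← hr, hB10,
          show (∏ k, T' p 1 0 (s k) (cpl s k)) =
              ∏ k, if s k = 1 then ((p 0 - p 3 : ℝ) : ℂ) else ((p 1 - p 2 : ℝ) : ℂ) from
            Finset.prod_congr rfl fun k _ => by
              rcases fin2_cases (s k) with h | h <;> simp [T', cpl, h],
          prod_ite_one, hcast_b (wt (cpl s)), wt_cpl, Nat.sub_sub_self (wt_le s)]
      · have hst' : ∃ k, s k = t k := by
          obtain ⟨k, hk⟩ := Function.ne_iff.mp hst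
          refine ⟨k, ?_⟩
          revert hk; show s k + 1 ≠ t k → _; generalize s k = a; generalize t k = b
          revert a b; decide
        obtain ⟨k, hk⟩ := hst'
        rw [if_neg hst, Finset.prod_eq_zero (Finset.mem_univ k) (by
          rw [hk]; rcases fin2_cases (t k) with h | h <;> simp [T', h]), mul_zero]
    · -- i = 1, j = 1
      rcases eq_or_ne s t with rfl | hst
      · rw [if_pos rfl, Real.sqrt_mul_self hx1', hB11,
          show (∏ k, T' p 1 1 (s k) (s k)) =
              ∏ k, if s k = 1 then ((p 0 + p 3 : ℝ) : ℂ) else ((p 1 + p 2 : ℝ) : ℂ) from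
            Finset.prod_congr rfl fun k _ => by
              rcases fin2_cases (s k) with h | h <;> simp [T', h],
          prod_ite_one, hcast_a (wt (cpl s)), wt_cpl, Nat.sub_sub_self (wt_le s)]
      · obtain ⟨k, hk⟩ := Function.ne_iff.mp hst
        rw [if_neg (fun h => hst (cpl_inj h)),
          Finset.prod_eq_zero (Finset.mem_univ k) (by simp [T', hk]), mul_zero]
  have hr2 : (r : ℂ) * (r : ℂ) = ((x * (1 - x) : ℝ) : ℂ) := by
    rw [hr]; norm_cast; exact Real.mul_self_sqrt (mul_nonneg hx0 hx1')
  have hBs : ∀ s : Fin n → Fin 2, (B s).charpoly =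
      X ^ 2 - C ((aw (wt s) : ℝ) : ℂ) * X
        + C ((x * (1 - x) * ((aw (wt s)) ^ 2 - (bw (wt s)) ^ 2) : ℝ) : ℂ) := by
    intro s
    rw [my_charpoly_fin_two, hB00, hB01, hB10, hB11]
    congr 1
    · congr 2
      push_cast
      ring
    · congr 1
      push_cast at hr2 ⊢
      linear_combination (-(((bw (wt s) : ℝ) : ℂ) ^ 2)) * hr2
  rw [hMB, show (blockDiagonal B).submatrix (⇑e) (⇑e)
      = reindex e.symm e.symm (blockDiagonal B) by rw [reindex_apply, Equiv.symm_symm],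
    Matrix.charpoly_reindex, my_charpoly_blockDiagonal]
  rw [Finset.prod_congr rfl fun s _ => hBs s]
  rw [← Finset.prod_fiberwise_of_maps_to
    (fun s _ => Finset.mem_range.mpr (Nat.lt_succ_of_le (wt_le s))) _]
  refine Finset.prod_congr rfl fun w hw => ?_
  rw [Finset.prod_congr rfl (fun s hs => by rw [(Finset.mem_filter.mp hs).2]),
    Finset.prod_const, card_wt]

end
end

section
/- Let R be a commutative ring, N an even natural number, and A an N×N matrix over R (0-indexed) such that A i j = 0 whenever j ≠ i and i + j ≠ N − 1 (i.e. A is supported on the diagonal and the anti-diagonal). Then the characteristic polynomial of A equals ∏_{i=0}^{N/2 − 1} ((X − C(A i i))·(X − C(A (N−1−i) (N−1−i))) − C(A i (N−1−i))·C(A (N−1−i) i)), where C denotes the constant-polynomial embedding. -/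
open Matrix BigOperators Polynomial

/-!
Pairing `k` with `N - 1 - k` gives a bijection `Fin 2 × Fin (N / 2) ≃ Fin N` that makes the
matrix block diagonal with `2 × 2` blocks. The characteristic matrix is block diagonal for the
same bijection, so its determinant is the product of the determinants of the `2 × 2` blocks.
-/

namespace Matrix

variable {R m n o : Type*} [CommRing R] [Fintype m] [DecidableEq m] [Fintype n] [DecidableEq n]
  [Fintype o] [DecidableEq o]

theorem det_eq_prod_det_of_equiv_prod (M : Matrix n n R) (e : m × o ≃ n)
    (hM : ∀ i j k l, k ≠ l → M (e (i, k)) (e (j, l)) = 0) :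
    M.det = ∏ k, (M.submatrix (fun i ↦ e (i, k)) (fun j ↦ e (j, k))).det := by
  have hblock : M.submatrix e e =
      blockDiagonal fun k ↦ M.submatrix (fun i ↦ e (i, k)) (fun j ↦ e (j, k)) := by
    ext ⟨i, k⟩ ⟨j, l⟩
    obtain rfl | hkl := eq_or_ne k l
    · simp
    · simp [blockDiagonal_apply_ne _ _ _ hkl, hM i j k l hkl]
  rw [← det_submatrix_equiv_self e, hblock, det_blockDiagonal]

theorem charmatrix_submatrix {f : m → n} (hf : Function.Injective f) (M : Matrix n n R) :
    (M.submatrix f f).charmatrix = M.charmatrix.submatrix f f := by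
  ext i j : 1
  obtain rfl | hij := eq_or_ne i j
  · simp
  · simp [hij, hf.ne hij]

theorem charpoly_eq_prod_charpoly_of_equiv_prod (M : Matrix n n R) (e : m × o ≃ n)
    (hM : ∀ i j k l, k ≠ l → M (e (i, k)) (e (j, l)) = 0) :
    M.charpoly = ∏ k, (M.submatrix (fun i ↦ e (i, k)) (fun j ↦ e (j, k))).charpoly := by
  have hinj (k : o) : Function.Injective fun i ↦ e (i, k) :=
    fun i j h ↦ (Prod.ext_iff.mp (e.injective h)).1
  refine (det_eq_prod_det_of_equiv_prod M.charmatrix e fun i j k l hkl ↦ ?_).trans ?_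
  · have hne : e (i, k) ≠ e (j, l) := e.injective.ne fun h ↦ hkl (Prod.ext_iff.mp h).2
    simp [hne, hM i j k l hkl]
  · simp only [charpoly, charmatrix_submatrix (hinj _)]

theorem charpoly_fin_two_eq_mul_sub_mul (M : Matrix (Fin 2) (Fin 2) R) :
    M.charpoly = (X - C (M 0 0)) * (X - C (M 1 1)) - C (M 0 1) * C (M 1 0) := by
  rw [charpoly, det_fin_two, charmatrix_apply_eq, charmatrix_apply_eq,
    charmatrix_apply_ne _ _ _ (by decide), charmatrix_apply_ne _ _ _ (by decide), neg_mul_neg]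

end Matrix

def antidiagPair (N : ℕ) (k : Fin (N / 2)) : Fin 2 → Fin N :=
  ![⟨k, by omega⟩, ⟨N - 1 - k, by omega⟩]

theorem antidiagPair_injective {N : ℕ} :
    Function.Injective fun p : Fin 2 × Fin (N / 2) ↦ antidiagPair N p.2 p.1 := by
  rintro ⟨i, k⟩ ⟨j, l⟩
  have hk := k.isLt
  have hl := l.isLt
  revert i j
  simp only [Fin.forall_fin_two, antidiagPair, cons_val_zero, cons_val_one, Prod.mk.injEq,
    Fin.ext_iff, Fin.val_zero, Fin.val_one, true_and]
  omega

noncomputable def antidiagPairEquiv {N : ℕ} (hN : Even N) : Fin 2 × Fin (N / 2) ≃ Fin N :=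
  Equiv.ofBijective _ <| (Fintype.bijective_iff_injective_and_card _).mpr
    ⟨antidiagPair_injective, by simp [Nat.mul_div_cancel' hN.two_dvd]⟩

theorem antidiagPair_apply_eq_zero {R : Type*} [Zero R] {N : ℕ} (A : Matrix (Fin N) (Fin N) R)
    (hA : ∀ i j : Fin N, j ≠ i → (i : ℕ) + (j : ℕ) ≠ N - 1 → A i j = 0)
    (i j : Fin 2) {k l : Fin (N / 2)} (hkl : k ≠ l) :
    A (antidiagPair N k i) (antidiagPair N l j) = 0 := by
  have hk := k.isLt
  have hl := l.isLt
  have hkl' : (k : ℕ) ≠ l := Fin.val_ne_of_ne hkl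
  apply hA <;> revert i j <;>
    simp only [Fin.forall_fin_two, antidiagPair, cons_val_zero, cons_val_one, ne_eq,
      Fin.ext_iff] <;>
    omega

/-- The characteristic polynomial of a matrix supported on the diagonal and anti-diagonal
is the product of the characteristic polynomials of the 2×2 blocks pairing index `i`
with its reversal `N−1−i`. -/
theorem stmt12 {R : Type*} [CommRing R] (N : ℕ) (hN : Even N)
    (A : Matrix (Fin N) (Fin N) R)
    (hA : ∀ i j : Fin N, j ≠ i → (i : ℕ) + (j : ℕ) ≠ N - 1 → A i j = 0) :
    A.charpoly = ∏ i : Fin (N / 2),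
      ((X - C (A ⟨i, by have := i.isLt; omega⟩ ⟨i, by have := i.isLt; omega⟩)) *
        (X - C (A ⟨N - 1 - i, by have := i.isLt; omega⟩ ⟨N - 1 - i, by have := i.isLt; omega⟩))
       - C (A ⟨i, by have := i.isLt; omega⟩ ⟨N - 1 - i, by have := i.isLt; omega⟩) *
         C (A ⟨N - 1 - i, by have := i.isLt; omega⟩ ⟨i, by have := i.isLt; omega⟩)) := by
  rw [A.charpoly_eq_prod_charpoly_of_equiv_prod (antidiagPairEquiv hN)
    fun i j _ _ hkl ↦ antidiagPair_apply_eq_zero A hA i j hkl]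
  exact Finset.prod_congr rfl fun k _ ↦ charpoly_fin_two_eq_mul_sub_mul _
end
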